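/- arXiv:0812.2841 — 10 statements merged into one kernel-verified Lean document; each statement's English description precedes it below -/
import Mathlib

section
/- Let m be a natural number with m > 2. Then m is prime if and only if ∏_{j=1}^{m-1} (2^j + 1) ≡ 1 (mod 2^m − 1). -/
/-!
If `x` has odd order `e` in a commutative ring and every `x ^ j - 1` with `0 < j < e` is a unit,
then `∏_{0<j<e} (x ^ j + 1) = 1`: multiplying by `∏ (x ^ j - 1)` gives `∏ (x ^ (2 * j) - 1)`,
and `j ↦ 2 * j mod e` permutes the factors. For `x = 2` modulo `2 ^ p - 1` this is the forward
direction.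

Conversely, suppose the congruence holds. If `2` has order `e ∣ m` modulo a prime `q`, the same
identity modulo `q` turns `∏_{j<m} (2 ^ j + 1)` into `2 ^ (m / e)`, while the congruence makes it
`2`; hence `e ∣ m / e - 1`. Every prime `p` occurs as such an order, and so does every product
`p * v` of odd primes `p < v` (a primitive prime divisor of `2 ^ (p * v) - 1`). For odd composite
`m` with least prime factor `p`, and `v` the least prime factor of `m / p`, the conditions for `v`
and `p * v` force `v ∣ p - 1`. Even `m` fail since `3` divides `2 ^ m - 1` and the factor `2 + 1`.
-/

open Finset

theorem prod_Ico_mul_mod_eq {M : Type*} [CommMonoid M] (f : ℕ → M) {a e : ℕ}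
    (ha : a.Coprime e) : ∏ j ∈ Ico 1 e, f (a * j % e) = ∏ j ∈ Ico 1 e, f j := by
  have hmaps : Set.MapsTo (a * · % e) (Ico 1 e) (Ico 1 e) := by
    intro j hj
    simp only [coe_Ico, Set.mem_Ico] at hj ⊢
    refine ⟨Nat.pos_of_ne_zero fun h0 => ?_, Nat.mod_lt _ (by omega)⟩
    have : e ∣ j := ha.symm.dvd_of_dvd_mul_left (Nat.dvd_of_mod_eq_zero h0)
    exact absurd (Nat.le_of_dvd (by omega) this) (by omega)
  have hinj : Set.InjOn (a * · % e) (Ico 1 e) := by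
    intro i hi j hj hij
    simp only [coe_Ico, Set.mem_Ico] at hi hj
    exact (Nat.ModEq.cancel_left_of_coprime ha.symm hij).eq_of_lt_of_lt hi.2 hj.2
  exact prod_nbij _ (fun j hj => hmaps hj) hinj
    (surjOn_of_injOn_of_card_le _ hmaps hinj le_rfl) fun _ _ => rfl

theorem prod_Ico_pow_add_one_eq_one {R : Type*} [CommRing R] {x : R} {e : ℕ} (he : Odd e)
    (hx : x ^ e = 1) (hunit : ∀ j ∈ Ico 1 e, IsUnit (x ^ j - 1)) :
    ∏ j ∈ Ico 1 e, (x ^ j + 1) = 1 := by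
  refine (IsUnit.prod_iff.mpr hunit).mul_left_cancel ?_
  calc (∏ j ∈ Ico 1 e, (x ^ j - 1)) * ∏ j ∈ Ico 1 e, (x ^ j + 1)
      = ∏ j ∈ Ico 1 e, (x ^ (2 * j % e) - 1) := by
        rw [← prod_mul_distrib]
        refine prod_congr rfl fun j _ => ?_
        rw [← pow_eq_pow_mod _ hx, mul_comm 2 j, pow_mul]
        ring
    _ = (∏ j ∈ Ico 1 e, (x ^ j - 1)) * 1 := by
        rw [mul_one, prod_Ico_mul_mod_eq (x ^ · - 1) (Nat.coprime_two_left.mpr he)]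

theorem prod_range_mul_eq_pow {M : Type*} [CommMonoid M] {f : ℕ → M} {e : ℕ}
    (hf : Function.Periodic f e) (k : ℕ) :
    ∏ j ∈ range (e * k), f j = (∏ j ∈ range e, f j) ^ k := by
  induction k with
  | zero => simp
  | succ k ih =>
    rw [Nat.mul_succ, prod_range_add, ih, pow_succ]
    congr 1
    refine prod_congr rfl fun j _ => ?_
    rw [add_comm, mul_comm]
    exact hf.nat_mul k j

theorem prod_range_pow_add_one_eq_two_pow {R : Type*} [CommRing R] {x : R} {e : ℕ} (he : Odd e)
    (hx : x ^ e = 1) (hunit : ∀ j ∈ Ico 1 e, IsUnit (x ^ j - 1)) (k : ℕ) :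
    ∏ j ∈ range (e * k), (x ^ j + 1) = 2 ^ k := by
  have hper : Function.Periodic (fun j => x ^ j + 1) e := fun j => by simp [pow_add, hx]
  rw [prod_range_mul_eq_pow hper, prod_range_eq_mul_Ico _ he.pos,
    prod_Ico_pow_add_one_eq_one he hx hunit]
  norm_num

theorem two_pow_eq_one_iff_dvd {n k : ℕ} : (2 : ZMod n) ^ k = 1 ↔ n ∣ 2 ^ k - 1 := by
  rw [← ZMod.natCast_eq_zero_iff, Nat.cast_sub Nat.one_le_two_pow]
  push_cast
  exact sub_eq_zero.symm

theorem two_ne_one {R : Type*} [Ring R] [Nontrivial R] : (2 : R) ≠ 1 :=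
  fun h => one_ne_zero (by rwa [← one_add_one_eq_two, add_eq_left] at h)

theorem prod_two_pow_add_one_modEq_one_iff {n m : ℕ} :
    ∏ j ∈ Ico 1 m, (2 ^ j + 1) ≡ 1 [MOD n] ↔ ∏ j ∈ Ico 1 m, ((2 : ZMod n) ^ j + 1) = 1 := by
  rw [← ZMod.natCast_eq_natCast_iff]
  push_cast
  rfl

theorem prod_two_pow_add_one_modEq_one_of_prime {p : ℕ} (hp : p.Prime) (hp2 : p ≠ 2) :
    ∏ j ∈ Ico 1 p, (2 ^ j + 1) ≡ 1 [MOD 2 ^ p - 1] := by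
  rw [prod_two_pow_add_one_modEq_one_iff]
  refine prod_Ico_pow_add_one_eq_one (hp.odd_of_ne_two hp2) (two_pow_eq_one_iff_dvd.mpr dvd_rfl)
    fun j hj => ?_
  simp only [mem_Ico] at hj
  have hjp : j.Coprime p :=
    (hp.coprime_iff_not_dvd.mpr (Nat.not_dvd_of_pos_of_lt (by omega) hj.2)).symm
  have hcast : ((2 ^ j - 1 : ℕ) : ZMod (2 ^ p - 1)) = 2 ^ j - 1 := by
    rw [Nat.cast_sub Nat.one_le_two_pow]
    push_cast
    rfl
  rw [← hcast, ZMod.isUnit_iff_coprime, Nat.Coprime, Nat.pow_sub_one_gcd_pow_sub_one, hjp,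
    pow_one]

theorem dvd_div_sub_one_of_prod_modEq {m q e : ℕ} (hm : Odd m) (hq : q.Prime)
    (hqe : orderOf (2 : ZMod q) = e) (hem : e ∣ m)
    (h : ∏ j ∈ Ico 1 m, (2 ^ j + 1) ≡ 1 [MOD 2 ^ m - 1]) : e ∣ m / e - 1 := by
  have := Fact.mk hq
  have he : Odd e := hm.of_dvd_nat hem
  have hxe : (2 : ZMod q) ^ e = 1 := hqe ▸ pow_orderOf_eq_one _
  have hunit : ∀ j ∈ Ico 1 e, IsUnit ((2 : ZMod q) ^ j - 1) := fun j hj => by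
    simp only [mem_Ico] at hj
    exact (sub_ne_zero.mpr (pow_ne_one_of_lt_orderOf (by omega) (hqe ▸ hj.2))).isUnit
  have hprod : ∏ j ∈ Ico 1 m, ((2 : ZMod q) ^ j + 1) = 1 :=
    prod_two_pow_add_one_modEq_one_iff.mp
      (h.of_dvd (two_pow_eq_one_iff_dvd.mp (orderOf_dvd_iff_pow_eq_one.mp (hqe ▸ hem))))
  have hpow : (2 : ZMod q) ^ (m / e - 1) * 2 = 1 * 2 := by
    calc (2 : ZMod q) ^ (m / e - 1) * 2 = 2 ^ (m / e) := by
          rw [← pow_succ, Nat.sub_add_cancel (Nat.div_pos (Nat.le_of_dvd hm.pos hem) he.pos)]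
      _ = ∏ j ∈ range m, ((2 : ZMod q) ^ j + 1) := by
          rw [← prod_range_pow_add_one_eq_two_pow he hxe hunit, Nat.mul_div_cancel' hem]
      _ = 1 * 2 := by
          rw [prod_range_eq_mul_Ico _ hm.pos, hprod]
          norm_num
  have htwo : IsUnit (2 : ZMod q) := IsUnit.of_pow_eq_one hxe he.pos.ne'
  simpa only [hqe] using orderOf_dvd_of_pow_eq_one (htwo.mul_right_cancel hpow)

theorem not_prod_two_pow_add_one_modEq_one_of_even {m : ℕ} (hm : Even m) (hm0 : m ≠ 0) :
    ¬ ∏ j ∈ Ico 1 m, (2 ^ j + 1) ≡ 1 [MOD 2 ^ m - 1] := by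
  intro h
  have hm2 : 2 ≤ m := Nat.le_of_dvd (Nat.pos_of_ne_zero hm0) hm.two_dvd
  have h3 : 3 ∣ 2 ^ m - 1 := by
    obtain ⟨k, rfl⟩ := hm
    rw [← two_pow_eq_one_iff_dvd, ← two_mul, pow_mul]
    exact (congrArg (· ^ k) (by decide : (2 : ZMod 3) ^ 2 = 1)).trans (one_pow k)
  have h0 := prod_two_pow_add_one_modEq_one_iff.mp (h.of_dvd h3)
  rw [prod_eq_zero (i := 1) (by simp only [mem_Ico]; omega) (by decide)] at h0
  exact zero_ne_one h0

theorem exists_prime_orderOf_two_eq_prime {p : ℕ} (hp : p.Prime) :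
    ∃ q, q.Prime ∧ orderOf (2 : ZMod q) = p := by
  have := Fact.mk hp
  have h1 : 2 ^ p - 1 ≠ 1 := by
    have := Nat.pow_le_pow_right two_pos hp.two_le
    omega
  have := Fact.mk (Nat.minFac_prime h1)
  exact ⟨_, Nat.minFac_prime h1,
    orderOf_eq_prime (two_pow_eq_one_iff_dvd.mpr (Nat.minFac_dvd _)) two_ne_one⟩

theorem dvd_or_dvd_of_dvd_prime_mul_prime {d u v : ℕ} (hu : u.Prime) (hv : v.Prime)
    (hd : d ∣ u * v) (hne : d ≠ u * v) : d ∣ u ∨ d ∣ v := by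
  obtain ⟨d₁, d₂, h₁, h₂, rfl⟩ := Nat.dvd_mul.mp hd
  rcases (Nat.dvd_prime hu).mp h₁ with rfl | rfl
  · exact .inr (by simpa using h₂)
  rcases (Nat.dvd_prime hv).mp h₂ with rfl | rfl
  · exact .inl (by simp)
  · exact absurd rfl hne

theorem dvd_of_dvd_geom_sum {l a n : ℕ} (ha : (a : ZMod l) = 1)
    (h : l ∣ ∑ i ∈ range n, a ^ i) : l ∣ n := by
  rw [← ZMod.natCast_eq_zero_iff] at h ⊢
  simpa [ha] using h

theorem not_sq_dvd_geom_sum {p a : ℕ} [hp : Fact p.Prime] (hp2 : Odd p) (ha : 1 < a) :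
    ¬ p ^ 2 ∣ ∑ i ∈ range p, a ^ i := by
  set S := ∑ i ∈ range p, a ^ i
  have hgeom : S * (a - 1) = a ^ p - 1 := geom_sum_mul_of_one_le ha.le p
  have hS : S ≠ 0 := by
    rintro h0
    rw [h0, zero_mul, eq_comm, Nat.sub_eq_zero_iff_le] at hgeom
    exact absurd hgeom (not_le.mpr (Nat.one_lt_pow hp.out.ne_zero ha))
  by_cases hdvd : p ∣ a - 1
  · have hpa : ¬ p ∣ a := fun h => hp.out.one_lt.ne'
      (Nat.dvd_one.mp (by simpa [Nat.sub_sub_self ha.le] using Nat.dvd_sub h hdvd))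
    have hlte := padicValNat.pow_sub_pow hp2 ha hdvd hpa hp.out.ne_zero
    rw [one_pow, ← hgeom, padicValNat.mul hS (by omega), padicValNat_self] at hlte
    rw [padicValNat_dvd_iff_le hS]
    omega
  · -- Fermat: `S * (a - 1) = a ^ p - 1 ≡ a - 1 [MOD p]`, so `p ∤ S`.
    intro h2
    apply hdvd
    have hcast := congrArg (Nat.cast : ℕ → ZMod p) hgeom
    rw [← ZMod.natCast_eq_zero_iff, Nat.cast_sub ha.le]
    rw [Nat.cast_sub (Nat.one_le_pow _ _ (by omega)), Nat.cast_mul, Nat.cast_pow, ZMod.pow_card,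
      (ZMod.natCast_eq_zero_iff _ _).mpr ((dvd_pow_self p two_ne_zero).trans h2), zero_mul] at hcast
    exact hcast.symm

theorem lt_of_mul_two_pow_sub_one_mul_eq {u v C : ℕ} (hu : 3 ≤ u) (huv : u < v)
    (hC : C * (2 ^ u - 1) * (2 ^ v - 1) = 2 ^ (u * v) - 1) : v < C := by
  by_contra! hle
  have hlt : C * (2 ^ u - 1) * (2 ^ v - 1) < 2 ^ v * 2 ^ u * 2 ^ v := by
    calc C * (2 ^ u - 1) * (2 ^ v - 1) ≤ v * 2 ^ u * 2 ^ v :=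
          Nat.mul_le_mul (Nat.mul_le_mul hle (Nat.sub_le _ _)) (Nat.sub_le _ _)
      _ < 2 ^ v * 2 ^ u * 2 ^ v := by gcongr; exact Nat.lt_two_pow_self
  have hpow : 2 ^ v * 2 ^ u * 2 ^ v < 2 ^ (u * v) := by
    rw [← pow_add, ← pow_add]
    exact Nat.pow_lt_pow_right one_lt_two (by nlinarith)
  omega

theorem orderOf_two_eq_mul_of_dvd_geom_sum {u v l : ℕ} (hu : u.Prime) (hv : v.Prime)
    (huv : u < v) (hl : l.Prime) (hlv : l ≠ v) (hlS : l ∣ ∑ i ∈ range v, (2 ^ u) ^ i)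
    (hlS' : l ∣ ∑ i ∈ range u, (2 ^ v) ^ i) : orderOf (2 : ZMod l) = u * v := by
  have := Fact.mk hl
  have hlN : (2 : ZMod l) ^ (u * v) = 1 := by
    rw [two_pow_eq_one_iff_dvd, pow_mul, ← geom_sum_mul_of_one_le Nat.one_le_two_pow]
    exact hlS.mul_right _
  by_contra hne
  rcases dvd_or_dvd_of_dvd_prime_mul_prime hu hv (orderOf_dvd_of_pow_eq_one hlN) hne with h | h
  · have hlv' : l ∣ v :=
      dvd_of_dvd_geom_sum (by push_cast; exact orderOf_dvd_iff_pow_eq_one.mp h) hlS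
    exact hlv ((Nat.prime_dvd_prime_iff_eq hl hv).mp hlv')
  · have h2v : (2 : ZMod l) ^ v = 1 := orderOf_dvd_iff_pow_eq_one.mp h
    have hlu : l = u :=
      (Nat.prime_dvd_prime_iff_eq hl hu).mp (dvd_of_dvd_geom_sum (by push_cast; exact h2v) hlS')
    have h20 : (2 : ZMod l) ≠ 0 := fun h0 => by
      rw [h0, zero_pow hv.ne_zero] at h2v
      exact zero_ne_one h2v
    have hord : orderOf (2 : ZMod l) ∣ Nat.gcd v (l - 1) :=
      Nat.dvd_gcd h (ZMod.orderOf_dvd_card_sub_one h20)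
    have hcop : Nat.Coprime v (l - 1) :=
      Nat.coprime_of_lt_prime (Nat.sub_ne_zero_of_lt hl.one_lt) (by omega) hv
    rw [hcop, Nat.dvd_one, orderOf_eq_one_iff] at hord
    exact two_ne_one hord

theorem exists_prime_orderOf_two_eq_mul {u v : ℕ} (hu : u.Prime) (hv : v.Prime) (hu2 : 2 < u)
    (huv : u < v) : ∃ q, q.Prime ∧ orderOf (2 : ZMod q) = u * v := by
  have := Fact.mk hv
  set S := ∑ i ∈ range v, (2 ^ u) ^ i
  set S' := ∑ i ∈ range u, (2 ^ v) ^ i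
  have hS : S * (2 ^ u - 1) = 2 ^ (u * v) - 1 := by
    rw [geom_sum_mul_of_one_le Nat.one_le_two_pow, ← pow_mul]
  have hS' : S' * (2 ^ v - 1) = 2 ^ (u * v) - 1 := by
    rw [geom_sum_mul_of_one_le Nat.one_le_two_pow, ← pow_mul, mul_comm]
  have hcop : (2 ^ u - 1).Coprime (2 ^ v - 1) := by
    rw [Nat.Coprime, Nat.pow_sub_one_gcd_pow_sub_one, (Nat.coprime_primes hu hv).mpr huv.ne,
      pow_one]
  -- `C` is the cyclotomic value `Φ_{u v}(2)`.
  obtain ⟨C, hC⟩ : 2 ^ v - 1 ∣ S :=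
    hcop.symm.dvd_of_dvd_mul_right ⟨S', by rw [hS, ← hS', mul_comm]⟩
  have hC' : S' = (2 ^ u - 1) * C := by
    refine Nat.eq_of_mul_eq_mul_right (Nat.sub_pos_of_lt (Nat.one_lt_two_pow hv.ne_zero)) ?_
    rw [hS', ← hS, hC]
    ring
  have hvC : v < C := lt_of_mul_two_pow_sub_one_mul_eq hu2 huv (by rw [← hS, hC]; ring)
  have hv2C : ¬ v ^ 2 ∣ C := fun h => not_sq_dvd_geom_sum (hv.odd_of_ne_two (by omega))
    (Nat.one_lt_two_pow hu.ne_zero) (h.trans (Dvd.intro_left _ hC.symm))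
  obtain ⟨l, hl, hlC, hlv⟩ : ∃ l, l.Prime ∧ l ∣ C ∧ l ≠ v := by
    by_contra! h
    obtain ⟨k, rfl⟩ : ∃ k, C = v ^ k :=
      ⟨_, Nat.eq_prime_pow_of_unique_prime_dvd (by omega) fun hl hlC => h _ hl hlC⟩
    have hk : k < 2 := by
      by_contra! hk
      exact hv2C (pow_dvd_pow v hk)
    have : v ^ k ≤ v ^ 1 := Nat.pow_le_pow_right hv.pos (by omega)
    rw [pow_one] at this
    omega
  exact ⟨l, hl, orderOf_two_eq_mul_of_dvd_geom_sum hu hv huv hl hlv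
    (hlC.trans (Dvd.intro_left _ hC.symm)) (hlC.trans (Dvd.intro_left _ hC'.symm))⟩

theorem prime_of_dvd_div_sub_one {m : ℕ} (hm : 1 < m)
    (hprime : ∀ p, p.Prime → p ∣ m → p ∣ m / p - 1)
    (hmul : ∀ p v, p.Prime → v.Prime → p < v → p * v ∣ m → p * v ∣ m / (p * v) - 1) :
    m.Prime := by
  by_contra hnp
  set p := m.minFac
  have hp : p.Prime := Nat.minFac_prime hm.ne'
  obtain ⟨d, hd⟩ : p ∣ m := Nat.minFac_dvd m
  have hpd : p ∣ d - 1 := by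
    simpa [hd, Nat.mul_div_cancel_left _ hp.pos] using hprime p hp ⟨d, hd⟩
  have hd1 : d ≠ 1 := fun h => hnp (by rwa [hd, h, mul_one])
  set v := d.minFac
  have hv : v.Prime := Nat.minFac_prime hd1
  obtain ⟨w, hw⟩ : v ∣ d := Nat.minFac_dvd d
  have hm_eq : m = p * v * w := by rw [hd, hw, mul_assoc]
  have hw0 : 0 < w := Nat.pos_of_ne_zero fun h => by simp [h] at hm_eq; omega
  have hpv : p < v := by
    refine lt_of_le_of_ne (Nat.minFac_le_of_dvd hv.two_le ⟨p * w, by rw [hm_eq]; ring⟩) ?_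
    intro hpv
    have : p ∣ d - (d - 1) := Nat.dvd_sub (hpv ▸ ⟨w, hw⟩) hpd
    rw [Nat.sub_sub_self (hw ▸ Nat.mul_pos hv.pos hw0)] at this
    exact hp.one_lt.ne' (Nat.dvd_one.mp this)
  have hpw : 1 ≡ p * w [MOD v] := by
    refine (Nat.modEq_iff_dvd' (Nat.mul_pos hp.pos hw0)).mpr ?_
    simpa [hm_eq, mul_comm p v, mul_assoc, Nat.mul_div_cancel_left _ hv.pos]
      using hprime v hv ⟨p * w, by rw [hm_eq]; ring⟩
  have hw1 : 1 ≡ w [MOD v] := by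
    refine (Nat.modEq_iff_dvd' hw0).mpr ((Dvd.intro_left p rfl).trans ?_)
    simpa [hm_eq, Nat.mul_div_cancel_left _ (Nat.mul_pos hp.pos hv.pos)]
      using hmul p v hp hv hpv ⟨w, hm_eq⟩
  have hvp : v ∣ p - 1 :=
    (Nat.modEq_iff_dvd' hp.one_lt.le).mp (by simpa using hpw.trans (hw1.mul_left p).symm)
  have := Nat.le_of_dvd (Nat.sub_pos_of_lt hp.one_lt) hvp
  omega

theorem prime_iff_prod_two_pow_add_one_modEq (m : ℕ) (hm : 2 < m) :
    m.Prime ↔ (∏ j ∈ Finset.Icc 1 (m - 1), (2 ^ j + 1)) ≡ 1 [MOD 2 ^ m - 1] := by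
  rw [Icc_sub_one_right_eq_Ico_of_not_isMin
    (by simp only [isMin_iff_eq_bot, Nat.bot_eq_zero]; omega)]
  refine ⟨fun hp => prod_two_pow_add_one_modEq_one_of_prime hp (by omega), fun h => ?_⟩
  rcases Nat.even_or_odd m with heven | hodd
  · exact absurd h (not_prod_two_pow_add_one_modEq_one_of_even heven (by omega))
  have horder : ∀ e, e ∣ m → (∃ q, q.Prime ∧ orderOf (2 : ZMod q) = e) → e ∣ m / e - 1 :=
    fun e hem ⟨q, hq, hqe⟩ => dvd_div_sub_one_of_prod_modEq hodd hq hqe hem h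
  refine prime_of_dvd_div_sub_one (by omega)
    (fun p hp hpm => horder p hpm (exists_prime_orderOf_two_eq_prime hp))
    (fun p v hp hv hpv hpvm => horder _ hpvm (exists_prime_orderOf_two_eq_mul hp hv ?_ hpv))
  have := Nat.odd_iff.mp (hodd.of_dvd_nat (dvd_of_mul_right_dvd hpvm))
  have := hp.two_le
  omega
end

section
/- If m is a prime number with m > 2, then ∏_{j=1}^{m-1} (2^j + 1) ≡ 1 (mod 2^m − 1). -/
/-!
Work in `ZMod (2 ^ m - 1)`, where `x = 2` satisfies `x ^ m = 1`. Multiplying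
`∏ (x ^ j + 1)` by `Q = ∏ (x ^ j - 1)` gives `∏ (x ^ (2 * j) - 1)`, which is `Q` again because
`j ↦ 2 * j % m` permutes the nonzero residues modulo the odd number `m`. Each factor `x ^ j - 1`
is a unit, since `gcd (2 ^ j - 1, 2 ^ m - 1) = 2 ^ gcd (j, m) - 1 = 1` for `m` prime, so `Q`
cancels.
-/

open Finset

theorem Finset.prod_Ioo_mul_mod {M : Type*} [CommMonoid M] {a m : ℕ} (ha : a.Coprime m)
    (f : ℕ → M) : ∏ j ∈ Ioo 0 m, f (a * j % m) = ∏ j ∈ Ioo 0 m, f j := by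
  refine prod_nbij (fun j ↦ a * j % m) ?_ ?_ ?_ fun _ _ ↦ rfl
  · intro j hj
    rw [mem_Ioo] at hj ⊢
    refine ⟨Nat.pos_of_ne_zero fun h ↦ ?_, Nat.mod_lt _ (by omega)⟩
    have hmj : m ∣ j := ha.symm.dvd_of_dvd_mul_left (Nat.dvd_of_mod_eq_zero h)
    exact absurd (Nat.le_of_dvd hj.1 hmj) (by omega)
  · intro i hi j hj hij
    rw [coe_Ioo, Set.mem_Ioo] at hi hj
    have h : i % m = j % m := Nat.ModEq.cancel_left_of_coprime ha.symm hij
    rwa [Nat.mod_eq_of_lt hi.2, Nat.mod_eq_of_lt hj.2] at h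
  · intro b hb
    rw [coe_Ioo, Set.mem_Ioo] at hb
    obtain ⟨j, hjm, hj⟩ := Nat.exists_mul_mod_eq_of_coprime b ha (by omega)
    rw [Nat.mod_eq_of_lt hb.2] at hj
    refine ⟨j, ?_, hj⟩
    rw [coe_Ioo, Set.mem_Ioo]
    refine ⟨Nat.pos_of_ne_zero ?_, hjm⟩
    rintro rfl
    rw [mul_zero, Nat.zero_mod] at hj
    omega

theorem prod_Ioo_pow_add_one_eq_one {R : Type*} [CommRing R] {x : R} {m : ℕ} (hx : x ^ m = 1)
    (hm : Odd m) (hunit : ∀ j ∈ Ioo 0 m, IsUnit (x ^ j - 1)) :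
    ∏ j ∈ Ioo 0 m, (x ^ j + 1) = 1 := by
  have hQ : IsUnit (∏ j ∈ Ioo 0 m, (x ^ j - 1)) := IsUnit.prod_iff.mpr hunit
  refine hQ.mul_right_cancel ?_
  calc (∏ j ∈ Ioo 0 m, (x ^ j + 1)) * ∏ j ∈ Ioo 0 m, (x ^ j - 1)
      = ∏ j ∈ Ioo 0 m, (x ^ (2 * j) - 1) := by
        rw [← prod_mul_distrib]
        exact prod_congr rfl fun j _ ↦ by ring
    _ = ∏ j ∈ Ioo 0 m, (x ^ (2 * j % m) - 1) := by simp_rw [← pow_eq_pow_mod _ hx]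
    _ = ∏ j ∈ Ioo 0 m, (x ^ j - 1) := prod_Ioo_mul_mod (Nat.coprime_two_left.mpr hm) fun j ↦ x ^ j - 1
    _ = 1 * ∏ j ∈ Ioo 0 m, (x ^ j - 1) := (one_mul _).symm

theorem ZMod.isUnit_two_pow_sub_one {j m : ℕ} (h : j.Coprime m) :
    IsUnit ((2 : ZMod (2 ^ m - 1)) ^ j - 1) := by
  have hcop : (2 ^ j - 1).Coprime (2 ^ m - 1) := by
    rw [Nat.Coprime, Nat.pow_sub_one_gcd_pow_sub_one, h.gcd_eq_one, pow_one]
  simpa [Nat.cast_sub Nat.one_le_two_pow] using (ZMod.isUnit_iff_coprime _ _).mpr hcop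

theorem ZMod.two_pow_eq_one (m : ℕ) : (2 : ZMod (2 ^ m - 1)) ^ m = 1 := by
  have h := ZMod.natCast_self (2 ^ m - 1)
  rw [Nat.cast_sub Nat.one_le_two_pow] at h
  push_cast at h
  exact sub_eq_zero.mp h

theorem prod_two_pow_add_one_modEq_of_prime (m : ℕ) (hm : 2 < m) (hp : m.Prime) :
    (∏ j ∈ Finset.Icc 1 (m - 1), (2 ^ j + 1)) ≡ 1 [MOD 2 ^ m - 1] := by
  have hIcc : Icc 1 (m - 1) = Ioo 0 m := by ext; simp only [mem_Icc, mem_Ioo]; omega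
  have hunit (j : ℕ) (hj : j ∈ Ioo 0 m) : IsUnit ((2 : ZMod (2 ^ m - 1)) ^ j - 1) := by
    rw [mem_Ioo] at hj
    exact ZMod.isUnit_two_pow_sub_one (Nat.coprime_of_lt_prime hj.1.ne' hj.2 hp).symm
  rw [← ZMod.natCast_eq_natCast_iff, hIcc]
  push_cast
  exact prod_Ioo_pow_add_one_eq_one (ZMod.two_pow_eq_one m) (hp.odd_of_ne_two hm.ne') hunit
end

section
/- If m is a natural number with m > 2 and ∏_{j=1}^{m-1} (2^j + 1) ≡ 1 (mod 2^m − 1), then m is prime. -/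
/-!
For even `m` the hypothesis fails modulo `3`, which divides both `2^m - 1` and the factor
`2^1 + 1`; so `m` is odd. Let `r` be a prime and `d ∣ m` the order of `2` modulo `r`. Evaluating
`X^d - 1 = ∏_{j<d} (X - 2^j)` at `-1` gives `∏_{j<d} (2^j + 1) ≡ 2 (mod r)` for odd `d`, and as
`2^j` is `d`-periodic the hypothesis becomes `2 ≡ 2^(m/d) (mod r)`, i.e. `m/d ≡ 1 (mod d)`.

Every prime `p` is the order of `2` modulo any prime factor of `2^p - 1`, so `m/p ≡ 1 (mod p)` for
every prime `p ∣ m` and `m` is squarefree. If `m` is composite it has two distinct odd prime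
factors `p, q`, and `pq` is also the order of `2` modulo some prime: otherwise, by lifting the
exponent, `2^(pq) - 1` would divide `(2^p - 1)(2^q - 1)pq`, which is smaller. Writing `m = pqt`,
`qt ≡ 1 (mod p)` and `t ≡ 1 (mod pq)` give `q ≡ 1 (mod p)`, and symmetrically `p ≡ 1 (mod q)`.
-/

open Finset Polynomial

namespace IsPrimitiveRoot
variable {R : Type*} [CommRing R] [IsDomain R] {μ : R} {d : ℕ}

lemma prod_range_pow_add_one (hμ : IsPrimitiveRoot μ d) (hd : Odd d) :
    ∏ j ∈ range d, (μ ^ j + 1) = 2 := by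
  have h := congrArg (eval (-1)) (X_pow_sub_C_eq_prod hμ hd.pos (one_pow d))
  simp only [eval_sub, eval_pow, eval_X, eval_C, eval_prod, mul_one, hd.neg_one_pow] at h
  have hneg (j : ℕ) : -1 - μ ^ j = -(μ ^ j + 1) := by ring
  simp only [hneg, prod_neg, card_range, hd.neg_one_pow] at h
  linear_combination h

lemma prod_range_mul_pow_add_one (hμ : IsPrimitiveRoot μ d) (hd : Odd d) (s : ℕ) :
    ∏ j ∈ range (d * s), (μ ^ j + 1) = 2 ^ s := by
  induction s with
  | zero => simp
  | succ s ih =>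
    rw [mul_add_one, prod_range_add, ih, pow_succ, ← hμ.prod_range_pow_add_one hd]
    congr 1
    refine prod_congr rfl fun j _ => ?_
    rw [pow_add, pow_mul, hμ.pow_eq_one, one_pow, one_mul]

end IsPrimitiveRoot

lemma dvd_two_pow_sub_one_iff {r a : ℕ} : r ∣ 2 ^ a - 1 ↔ orderOf (2 : ZMod r) ∣ a := by
  rw [orderOf_dvd_iff_pow_eq_one, ← Nat.modEq_iff_dvd' Nat.one_le_two_pow,
    ← ZMod.natCast_eq_natCast_iff]
  push_cast
  exact eq_comm

lemma orderOf_two_ne_one {r : ℕ} (hr : r ≠ 1) : orderOf (2 : ZMod r) ≠ 1 := fun h =>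
  hr (Nat.dvd_one.mp (dvd_two_pow_sub_one_iff.mpr h.dvd))

lemma exists_prime_orderOf_two_eq {p : ℕ} (hp : p.Prime) :
    ∃ r, r.Prime ∧ orderOf (2 : ZMod r) = p := by
  have h4 : 4 ≤ 2 ^ p := by
    calc 4 = 2 ^ 2 := rfl
      _ ≤ 2 ^ p := Nat.pow_le_pow_right two_pos hp.two_le
  have hr := Nat.minFac_prime (n := 2 ^ p - 1) (by omega)
  refine ⟨_, hr, ?_⟩
  exact (hp.eq_one_or_self_of_dvd _ (dvd_two_pow_sub_one_iff.mp (Nat.minFac_dvd _))).resolve_left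
    (orderOf_two_ne_one hr.ne_one)

lemma padicValNat_two_pow_mul_sub_one {r a n : ℕ} [Fact r.Prime] (ha : a ≠ 0) (hn : n ≠ 0)
    (hr : r ∣ 2 ^ a - 1) :
    padicValNat r (2 ^ (a * n) - 1) = padicValNat r (2 ^ a - 1) + padicValNat r n := by
  have h1 : 1 < 2 ^ a := Nat.one_lt_two_pow ha
  have hodd : Odd r :=
    (Nat.Even.sub_odd h1.le ((Nat.even_pow' ha).mpr even_two) odd_one).of_dvd_nat hr
  have hr2 : ¬ r ∣ 2 ^ a := fun h => (Fact.out : r.Prime).ne_one <| Nat.dvd_one.mp <| by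
    simpa [Nat.sub_sub_self h1.le] using Nat.dvd_sub h hr
  simpa [pow_mul] using padicValNat.pow_sub_pow hodd h1 hr hr2 hn (y := 1)

lemma le_two_pow_pred (n : ℕ) : n ≤ 2 ^ (n - 1) := by
  have := (n - 1).lt_two_pow_self
  omega

lemma two_pow_sub_one_mul_lt {p q : ℕ} (hp : 3 ≤ p) (hq : 3 ≤ q) (hpq : p ≠ q) :
    (2 ^ p - 1) * (2 ^ q - 1) * (p * q) < 2 ^ (p * q) - 1 := by
  have hsum : 2 * p + 2 * q ≤ p * q + 2 := by
    rcases Nat.lt_or_gt_of_ne hpq with h | h <;> nlinarith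
  obtain ⟨e, he⟩ : ∃ e, p * q = p + q + e := ⟨p * q - p - q, by omega⟩
  have hpqe : p * q ≤ 2 ^ e :=
    calc p * q ≤ 2 ^ (p - 1) * 2 ^ (q - 1) :=
          Nat.mul_le_mul (le_two_pow_pred p) (le_two_pow_pred q)
      _ = 2 ^ (p - 1 + (q - 1)) := (pow_add ..).symm
      _ ≤ 2 ^ e := Nat.pow_le_pow_right two_pos (by omega)
  have hX : 2 ≤ 2 ^ p := Nat.le_self_pow (by omega) 2
  have hY : 2 ≤ 2 ^ q := Nat.le_self_pow (by omega) 2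
  have hZ : 1 ≤ 2 ^ e := Nat.one_le_two_pow
  rw [show 2 ^ (p * q) = 2 ^ p * 2 ^ q * 2 ^ e by rw [he, pow_add, pow_add]]
  generalize 2 ^ p = X at *
  generalize 2 ^ q = Y at *
  generalize 2 ^ e = Z at *
  generalize p * q = n at *
  suffices (X - 1) * (Y - 1) * n + 1 < X * Y * Z by omega
  obtain ⟨x, rfl⟩ : ∃ x, X = x + 1 := ⟨X - 1, by omega⟩
  obtain ⟨y, rfl⟩ : ∃ y, Y = y + 1 := ⟨Y - 1, by omega⟩
  simp only [Nat.add_sub_cancel]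
  nlinarith [Nat.mul_le_mul_left (x * y) hpqe]

lemma eq_or_eq_of_dvd_prime_mul_prime {p q d : ℕ} (hp : p.Prime) (hq : q.Prime) (hd : d ∣ p * q)
    (hd1 : d ≠ 1) (hdpq : d ≠ p * q) : d = p ∨ d = q := by
  obtain ⟨a, b, ha, hb, rfl⟩ := Nat.dvd_mul.mp hd
  rcases hp.eq_one_or_self_of_dvd a ha with rfl | rfl <;>
    rcases hq.eq_one_or_self_of_dvd b hb with rfl | rfl <;> simp_all

lemma exists_prime_orderOf_two_eq_mul_s2 {p q : ℕ} (hp : p.Prime) (hq : q.Prime) (hpo : Odd p)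
    (hqo : Odd q) (hpq : p ≠ q) : ∃ r, r.Prime ∧ orderOf (2 : ZMod r) = p * q := by
  by_contra! H
  have hp3 : 3 ≤ p := hp.two_le.lt_of_ne (hpo.ne_two_of_dvd_nat dvd_rfl).symm
  have hq3 : 3 ≤ q := hq.two_le.lt_of_ne (hqo.ne_two_of_dvd_nat dvd_rfl).symm
  have hA : 2 ^ p - 1 ≠ 0 := by have := Nat.one_lt_two_pow (n := p) (by omega); omega
  have hB : 2 ^ q - 1 ≠ 0 := by have := Nat.one_lt_two_pow (n := q) (by omega); omega
  have hN : 2 ^ (p * q) - 1 ≠ 0 := by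
    have := Nat.one_lt_two_pow (n := p * q) (by positivity); omega
  have hM : (2 ^ p - 1) * (2 ^ q - 1) * (p * q) ≠ 0 := by
    simp [hA, hB, hp.ne_zero, hq.ne_zero]
  have hdvd : 2 ^ (p * q) - 1 ∣ (2 ^ p - 1) * (2 ^ q - 1) * (p * q) := by
    refine (Nat.factorization_prime_le_iff_dvd hN hM).mp fun r hr => ?_
    have := Fact.mk hr
    by_cases hrN : r ∣ 2 ^ (p * q) - 1
    swap
    · simp [Nat.factorization_eq_zero_of_not_dvd hrN]
    simp only [Nat.factorization_def _ hr]
    rw [padicValNat.mul (by simp [hA, hB]) (by simp [hp.ne_zero, hq.ne_zero]),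
      padicValNat.mul hA hB, padicValNat.mul hp.ne_zero hq.ne_zero]
    rcases eq_or_eq_of_dvd_prime_mul_prime hp hq (dvd_two_pow_sub_one_iff.mp hrN)
      (orderOf_two_ne_one hr.ne_one) (H r hr) with hord | hord
    · rw [padicValNat_two_pow_mul_sub_one hp.ne_zero hq.ne_zero
        (dvd_two_pow_sub_one_iff.mpr hord.dvd)]
      omega
    · rw [mul_comm p q, padicValNat_two_pow_mul_sub_one hq.ne_zero hp.ne_zero
        (dvd_two_pow_sub_one_iff.mpr hord.dvd)]
      omega
  exact (Nat.le_of_dvd (Nat.pos_of_ne_zero hM) hdvd).not_gt (two_pow_sub_one_mul_lt hp3 hq3 hpq)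

lemma odd_of_prod_two_pow_add_one_modEq {m : ℕ} (hm : 2 ≤ m)
    (h : (∏ j ∈ Icc 1 (m - 1), (2 ^ j + 1)) ≡ 1 [MOD 2 ^ m - 1]) : Odd m := by
  rw [← Nat.not_even_iff_odd]
  rintro ⟨k, rfl⟩
  have h3N : 3 ∣ 2 ^ (k + k) - 1 := by
    simpa [← two_mul, pow_mul] using Nat.sub_dvd_pow_sub_pow 4 1 k
  have h3P : 3 ∣ ∏ j ∈ Icc 1 (k + k - 1), (2 ^ j + 1) :=
    dvd_prod_of_mem (fun j => 2 ^ j + 1) (mem_Icc.mpr ⟨le_rfl, by omega⟩)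
  have := h.of_dvd h3N
  unfold Nat.ModEq at this
  omega

theorem div_modEq_one_of_prod_two_pow_add_one_modEq {m d : ℕ} (hm : Odd m)
    (h : (∏ j ∈ Icc 1 (m - 1), (2 ^ j + 1)) ≡ 1 [MOD 2 ^ m - 1])
    (hd : ∃ r, r.Prime ∧ orderOf (2 : ZMod r) = d) (hdm : d ∣ m) : m / d ≡ 1 [MOD d] := by
  obtain ⟨r, hr, rfl⟩ := hd
  have := Fact.mk hr
  have hmod : ∏ j ∈ Icc 1 (m - 1), ((2 : ZMod r) ^ j + 1) = 1 := by
    simpa using (ZMod.natCast_eq_natCast_iff _ _ _).mpr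
      (h.of_dvd (dvd_two_pow_sub_one_iff.mpr hdm))
  have hprod := (IsPrimitiveRoot.orderOf (2 : ZMod r)).prod_range_mul_pow_add_one
    (hm.of_dvd_nat hdm) (m / orderOf (2 : ZMod r))
  rw [Nat.mul_div_cancel' hdm, prod_range_eq_mul_Ico _ hm.pos,
    ← Icc_sub_one_right_eq_Ico_of_not_isMin (by simpa using hm.pos.ne'), hmod] at hprod
  set s := m / orderOf (2 : ZMod r)
  have hs : 1 ≤ s := Nat.div_pos (Nat.le_of_dvd hm.pos hdm) (Nat.pos_of_dvd_of_pos hdm hm.pos)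
  have h2 : IsUnit (2 : ZMod r) := (orderOf_pos_iff.mp (Nat.pos_of_dvd_of_pos hdm hm.pos)).isUnit
  have hpow : (2 : ZMod r) ^ (s - 1) = 1 := h2.mul_left_cancel <| by
    rw [← pow_succ', Nat.sub_add_cancel hs, ← hprod]
    norm_num
  exact ((Nat.modEq_iff_dvd' hs).mpr (orderOf_dvd_of_pow_eq_one hpow)).symm

lemma exists_primes_ne_mul_dvd {m : ℕ} (hm : 1 < m) (hnp : ¬ m.Prime) (hsq : Squarefree m) :
    ∃ p q, p.Prime ∧ q.Prime ∧ p ≠ q ∧ p * q ∣ m := by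
  obtain ⟨p, hp, hpm⟩ := Nat.exists_prime_and_dvd hm.ne'
  obtain ⟨q, hq, hqm⟩ := Nat.exists_prime_and_dvd (n := m / p) fun h1 => hnp <| by
    rwa [← Nat.div_mul_cancel hpm, h1, one_mul]
  refine ⟨p, q, hp, hq, ?_, Nat.mul_dvd_of_dvd_div hpm hqm⟩
  rintro rfl
  exact hp.one_lt.ne' (Nat.isUnit_iff.mp (hsq p (Nat.mul_dvd_of_dvd_div hpm hqm)))

lemma squarefree_of_div_modEq_one {m : ℕ}
    (h : ∀ p, p.Prime → p ∣ m → m / p ≡ 1 [MOD p]) : Squarefree m :=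
  Nat.squarefree_iff_prime_squarefree.mpr fun p hp hpp => by
    have h0 := Nat.modEq_zero_iff_dvd.mpr (Nat.dvd_div_of_mul_dvd hpp)
    exact hp.not_dvd_one <| (Nat.modEq_iff_dvd' zero_le_one).mp <|
      h0.symm.trans (h p hp (dvd_of_mul_left_dvd hpp))

lemma lt_of_div_modEq_one {m p q : ℕ} (hp : 0 < p) (hq : 1 < q) (hpq : p * q ∣ m)
    (hmp : m / p ≡ 1 [MOD p]) (hmpq : m / (p * q) ≡ 1 [MOD p * q]) : p < q := by
  obtain ⟨t, rfl⟩ := hpq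
  rw [mul_assoc, Nat.mul_div_cancel_left _ hp] at hmp
  rw [Nat.mul_div_cancel_left _ (by positivity)] at hmpq
  have : 1 ≡ q [MOD p] := by simpa using hmp.symm.trans ((hmpq.of_mul_right q).mul_left q)
  have := Nat.le_of_dvd (by omega) ((Nat.modEq_iff_dvd' hq.le).mp this)
  omega

theorem prime_of_prod_two_pow_add_one_modEq (m : ℕ) (hm : 2 < m)
    (h : (∏ j ∈ Finset.Icc 1 (m - 1), (2 ^ j + 1)) ≡ 1 [MOD 2 ^ m - 1]) :
    m.Prime := by
  by_contra hnp
  have hodd := odd_of_prod_two_pow_add_one_modEq hm.le h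
  have hprime {p : ℕ} (hp : p.Prime) (hpm : p ∣ m) : m / p ≡ 1 [MOD p] :=
    div_modEq_one_of_prod_two_pow_add_one_modEq hodd h (exists_prime_orderOf_two_eq hp) hpm
  obtain ⟨p, q, hp, hq, hpq, hpqm⟩ :=
    exists_primes_ne_mul_dvd (by omega) hnp (squarefree_of_div_modEq_one fun _ => hprime)
  have hqpm : q * p ∣ m := mul_comm p q ▸ hpqm
  have hmpq : m / (p * q) ≡ 1 [MOD p * q] := div_modEq_one_of_prod_two_pow_add_one_modEq hodd h
    (exists_prime_orderOf_two_eq_mul_s2 hp hq (hodd.of_dvd_nat (dvd_of_mul_right_dvd hpqm))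
      (hodd.of_dvd_nat (dvd_of_mul_right_dvd hqpm)) hpq) hpqm
  exact (lt_of_div_modEq_one hp.pos hq.one_lt hpqm (hprime hp (dvd_of_mul_right_dvd hpqm))
      hmpq).asymm
    (lt_of_div_modEq_one hq.pos hp.one_lt hqpm (hprime hq (dvd_of_mul_right_dvd hqpm))
      (mul_comm p q ▸ hmpq))
end

section
/- Let M be a natural number with M > 1 and let m be a natural number with m > 2. Then m is prime if and only if ∏_{j=1}^{m-1} (M^j + 1) ≡ 1 (mod (M^m − 1)/(M − 1)). -/
/-!
For odd `n` and a primitive `n`-th root of unity `ζ`, evaluating `X ^ n - 1 = ∏ (X - ζ ^ j)` at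
`-1` gives `∏_{0<j<n} (ζ ^ j + 1) = 1`, so `Φ_n ∣ ∏_{0<j<n} (X ^ j + 1) - 1` in `ℤ[X]`.

If `m` is an odd prime, `(M ^ m - 1) / (M - 1) = Φ_m(M)` and the congruence follows. If `m = 2t`,
the factor `M ^ t + 1` divides both the modulus and the product. If `m` is odd and composite with
least prime factor `p`, let `d = m / p` and `c = Φ_d(M)`, a divisor of the modulus. As `M ^ d ≡ 1`
modulo `c`, the product splits into `p` blocks of length `d` and is `≡ 2 ^ (p - 1)`, so
`c ∣ 2 ^ (p - 1) - 1`. For `M ≥ 3` this contradicts `c > (M - 1) ^ φ(d) ≥ 2 ^ (p - 1)`; for `M = 2`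
the order of `2` modulo `c` divides `gcd(d, p - 1) = 1`, so `c = 1`, which is again too small.
-/

open Polynomial Finset

theorem Function.Periodic.prod_range_mul {M : Type*} [CommMonoid M] {g : ℕ → M} {d : ℕ}
    (hg : Function.Periodic g d) (k : ℕ) :
    ∏ j ∈ range (d * k), g j = (∏ j ∈ range d, g j) ^ k := by
  induction k with
  | zero => simp
  | succ k ih =>
    rw [mul_add_one, prod_range_add, ih, pow_succ]
    congr 1
    exact prod_congr rfl fun j _ => by simpa [add_comm, mul_comm] using hg.nat_mul k j

theorem Function.Periodic.prod_Ico_one_mul_add_one {M : Type*} [CommMonoid M] {g : ℕ → M}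
    {d : ℕ} (hg : Function.Periodic g d) (k : ℕ) :
    ∏ j ∈ Ico 1 (d * (k + 1)), g j = (∏ j ∈ Ico 1 d, g j) * (∏ j ∈ range d, g j) ^ k := by
  obtain rfl | hd := d.eq_zero_or_pos
  · simp
  rw [show d * (k + 1) = d + d * k by ring, ← prod_Ico_consecutive _ hd (Nat.le_add_right d _),
    prod_Ico_eq_prod_range g d, Nat.add_sub_cancel_left, ← hg.prod_range_mul k]
  congr 1
  exact prod_congr rfl fun j _ => by rw [add_comm, hg j]

theorem IsPrimitiveRoot.prod_pow_add_one_eq_one {R : Type*} [CommRing R] [IsDomain R]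
    [NeZero (2 : R)] {ζ : R} {n : ℕ} (hζ : IsPrimitiveRoot ζ n) (hn : Odd n) :
    ∏ j ∈ Ico 1 n, (ζ ^ j + 1) = 1 := by
  have h := congrArg (eval (-1)) (X_pow_sub_C_eq_prod hζ hn.pos (one_pow n))
  simp only [eval_sub, eval_pow, eval_X, eval_C, eval_prod, mul_one, hn.neg_one_pow] at h
  simp_rw [show ∀ i, -1 - ζ ^ i = -(ζ ^ i + 1) from fun i => by ring] at h
  rw [prod_neg, card_range, hn.neg_one_pow, prod_range_eq_mul_Ico _ hn.pos] at h
  refine mul_left_cancel₀ (two_ne_zero (α := R)) ?_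
  linear_combination h

theorem cyclotomic_dvd_prod_pow_add_one_sub_one {n : ℕ} (hn : Odd n) :
    cyclotomic n ℤ ∣ ∏ j ∈ Ico 1 n, (X ^ j + 1) - 1 := by
  have hζ := Complex.isPrimitiveRoot_exp n hn.pos.ne'
  rw [cyclotomic_eq_minpoly hζ hn.pos]
  apply minpoly.isIntegrallyClosed_dvd (hζ.isIntegral hn.pos)
  simp [hζ.prod_pow_add_one_eq_one hn]

theorem prod_pow_add_one_eq_one_of_isRoot_cyclotomic {R : Type*} [CommRing R] {n : ℕ}
    (hn : Odd n) {x : R} (hx : (cyclotomic n R).IsRoot x) :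
    ∏ j ∈ Ico 1 n, (x ^ j + 1) = 1 := by
  obtain ⟨q, hq⟩ := cyclotomic_dvd_prod_pow_add_one_sub_one hn
  have := congrArg (fun p => eval x (p.map (Int.castRingHom R))) hq
  simpa [Polynomial.map_prod, eval_prod, map_cyclotomic, hx.eq_zero, sub_eq_zero] using this

theorem prod_Ico_pow_add_one_eq_two_pow_of_isRoot_cyclotomic {R : Type*} [CommRing R] {n : ℕ}
    (hn : Odd n) {x : R} (hx : (cyclotomic n R).IsRoot x) (k : ℕ) :
    ∏ j ∈ Ico 1 (n * (k + 1)), (x ^ j + 1) = 2 ^ k := by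
  have hxn : x ^ n = 1 :=
    isRoot_of_unity_of_root_cyclotomic (Nat.mem_divisors_self n hn.pos.ne') hx
  have hg : Function.Periodic (fun j => x ^ j + 1) n := fun j => by simp [pow_add, hxn]
  rw [hg.prod_Ico_one_mul_add_one, prod_range_eq_mul_Ico _ hn.pos,
    prod_pow_add_one_eq_one_of_isRoot_cyclotomic hn hx]
  norm_num

theorem geom_sum_eq_zero_of_isRoot_cyclotomic {R : Type*} [CommRing R] {d m : ℕ} (hm : m ≠ 0)
    (hdm : d ∣ m) (hd : d ≠ 1) {x : R} (hx : (cyclotomic d R).IsRoot x) :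
    ∑ i ∈ range m, x ^ i = 0 := by
  rw [← eval_geom_sum, ← prod_cyclotomic_eq_geom_sum (Nat.pos_of_ne_zero hm), eval_prod]
  exact prod_eq_zero (mem_erase.2 ⟨hd, Nat.mem_divisors.2 ⟨hdm, hm⟩⟩) hx

theorem isRoot_cyclotomic_zmod_natAbs_eval (n M : ℕ) :
    (cyclotomic n (ZMod ((cyclotomic n ℤ).eval (M : ℤ)).natAbs)).IsRoot (M : ZMod _) := by
  rw [← map_cyclotomic_int n (ZMod _), IsRoot.def, ← Int.cast_natCast (R := ZMod _) M,
    eval_intCast_map, eq_intCast, ZMod.intCast_zmod_eq_zero_iff_dvd]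
  exact Int.natAbs_dvd.2 dvd_rfl

theorem Nat.minFac_sub_one_le_totient {n : ℕ} (hn : n ≠ 0) : n.minFac - 1 ≤ n.totient := by
  obtain rfl | hn1 := eq_or_ne n 1
  · simp
  rw [← Nat.totient_prime (Nat.minFac_prime hn1)]
  exact Nat.le_of_dvd (Nat.totient_pos.2 (Nat.pos_of_ne_zero hn))
    (Nat.totient_dvd_of_dvd (Nat.minFac_dvd n))

theorem prod_pow_add_one_modEq_one_of_prime {m : ℕ} (hm : m.Prime) (hodd : Odd m) (M : ℕ) :
    ∏ j ∈ Ico 1 m, (M ^ j + 1) ≡ 1 [MOD ∑ i ∈ range m, M ^ i] := by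
  set N := ∑ i ∈ range m, M ^ i
  have hx : (cyclotomic m (ZMod N)).IsRoot (M : ZMod N) := by
    have := Fact.mk hm
    rw [IsRoot.def, cyclotomic_prime, eval_geom_sum]
    exact_mod_cast ZMod.natCast_self N
  rw [← ZMod.natCast_eq_natCast_iff]
  push_cast
  exact prod_pow_add_one_eq_one_of_isRoot_cyclotomic hodd hx

theorem not_prod_pow_add_one_modEq_one_of_even {M t : ℕ} (hM : 0 < M) (ht : 0 < t) :
    ¬ ∏ j ∈ Ico 1 (t + t), (M ^ j + 1) ≡ 1 [MOD ∑ i ∈ range (t + t), M ^ i] := by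
  intro h
  have hN : M ^ t + 1 ∣ ∑ i ∈ range (t + t), M ^ i := by
    rw [sum_range_add]
    simp_rw [pow_add, ← mul_sum]
    exact ⟨_, by ring⟩
  have hP : M ^ t + 1 ∣ ∏ j ∈ Ico 1 (t + t), (M ^ j + 1) :=
    dvd_prod_of_mem _ (mem_Ico.2 ⟨ht, by omega⟩)
  have := Nat.dvd_one.1 (((h.of_dvd hN).dvd_iff dvd_rfl).1 hP)
  have := pow_pos hM t
  omega

theorem ZMod.dvd_sub_one_of_natCast_eq_one {n c : ℕ} (hn : n ≠ 0) (h : (n : ZMod c) = 1) :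
    c ∣ n - 1 :=
  (Nat.modEq_iff_dvd' (Nat.one_le_iff_ne_zero.2 hn)).1
    ((ZMod.natCast_eq_natCast_iff _ _ _).1 (by rw [h, Nat.cast_one])).symm

theorem two_pow_eq_one_of_prod_pow_add_one_modEq_one {M d k : ℕ} (hd : Odd d) (hd1 : d ≠ 1)
    (h : ∏ j ∈ Ico 1 (d * (k + 1)), (M ^ j + 1) ≡ 1 [MOD ∑ i ∈ range (d * (k + 1)), M ^ i]) :
    (2 : ZMod ((cyclotomic d ℤ).eval (M : ℤ)).natAbs) ^ k = 1 := by
  set c := ((cyclotomic d ℤ).eval (M : ℤ)).natAbs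
  have hx : (cyclotomic d (ZMod c)).IsRoot (M : ZMod c) := isRoot_cyclotomic_zmod_natAbs_eval d M
  have hcN : c ∣ ∑ i ∈ range (d * (k + 1)), M ^ i := (ZMod.natCast_eq_zero_iff _ _).1 <| by
    push_cast
    exact geom_sum_eq_zero_of_isRoot_cyclotomic (by simp [hd.pos.ne']) (dvd_mul_right d _) hd1 hx
  have hprod : ∏ j ∈ Ico 1 (d * (k + 1)), ((M : ZMod c) ^ j + 1) = 1 := by
    exact_mod_cast (ZMod.natCast_eq_natCast_iff _ _ _).2 (h.of_dvd hcN)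
  rw [← prod_Ico_pow_add_one_eq_two_pow_of_isRoot_cyclotomic hd hx, hprod]

theorem not_prod_pow_add_one_modEq_one_of_odd_of_not_prime {M m : ℕ} (hM : 1 < M) (hodd : Odd m)
    (hm : 1 < m) (hnp : ¬ m.Prime) :
    ¬ ∏ j ∈ Ico 1 m, (M ^ j + 1) ≡ 1 [MOD ∑ i ∈ range m, M ^ i] := by
  intro h
  set p := m.minFac
  have hp : p.Prime := Nat.minFac_prime hm.ne'
  have hp2 := hp.two_le
  obtain ⟨d, hmd⟩ : p ∣ m := Nat.minFac_dvd m
  have hd : 1 < d := by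
    rcases d with _ | _ | d
    · omega
    · exact absurd (by simpa [hmd] using hp) hnp
    · omega
  have hpd : p ≤ d.minFac := Nat.minFac_le_of_dvd (Nat.minFac_prime hd.ne').two_le
    ((Nat.minFac_dvd d).trans (Dvd.intro_left p hmd.symm))
  clear_value p
  set c := ((cyclotomic d ℤ).eval (M : ℤ)).natAbs
  have hc : (M - 1) ^ (p - 1) < c := by
    have htot : p - 1 ≤ d.totient :=
      (Nat.sub_le_sub_right hpd 1).trans (Nat.minFac_sub_one_le_totient (by omega))
    exact (Nat.pow_le_pow_right (by omega) htot).trans_lt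
      (sub_one_pow_totient_lt_natAbs_cyclotomic_eval hd hM.ne')
  have h2 : (2 : ZMod c) ^ (p - 1) = 1 := by
    rw [hmd, mul_comm, ← Nat.sub_add_cancel hp.one_lt.le] at h
    exact two_pow_eq_one_of_prod_pow_add_one_modEq_one (Nat.Odd.of_mul_right (hmd ▸ hodd))
      hd.ne' h
  obtain rfl | hM3 : M = 2 ∨ 2 < M := by omega
  · have hcop : d.gcd (p - 1) = 1 := Nat.gcd_eq_one_of_lt_minFac (by omega) (by omega)
    have h2d : (2 : ZMod c) ^ d = 1 := by
      exact_mod_cast isRoot_of_unity_of_root_cyclotomic (Nat.mem_divisors_self d (by omega))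
        (isRoot_cyclotomic_zmod_natAbs_eval d 2)
    have h21 : ((2 : ℕ) : ZMod c) = 1 := by
      simpa [hcop] using pow_gcd_eq_one.2 ⟨h2d, h2⟩
    have hle : c ≤ 1 := Nat.le_of_dvd one_pos (ZMod.dvd_sub_one_of_natCast_eq_one two_ne_zero h21)
    rw [show 2 - 1 = 1 from rfl, one_pow] at hc
    omega
  · have hle : c ≤ 2 ^ (p - 1) - 1 :=
      Nat.le_of_dvd (Nat.sub_pos_of_lt (Nat.one_lt_two_pow (by omega)))
        (ZMod.dvd_sub_one_of_natCast_eq_one (n := 2 ^ (p - 1)) (by positivity)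
          (by exact_mod_cast h2))
    have hpow := Nat.pow_le_pow_left (show 2 ≤ M - 1 by omega) (p - 1)
    omega

theorem prime_iff_prod_pow_add_one_modEq (M m : ℕ) (hM : 1 < M) (hm : 2 < m) :
    m.Prime ↔
      (∏ j ∈ Finset.Icc 1 (m - 1), (M ^ j + 1)) ≡ 1 [MOD (M ^ m - 1) / (M - 1)] := by
  rw [← Nat.geomSum_eq hM, Finset.Icc_sub_one_right_eq_Ico_of_not_isMin (by simpa using hm.ne_bot)]
  refine ⟨fun hp => prod_pow_add_one_modEq_one_of_prime hp (hp.odd_of_ne_two hm.ne') M,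
    fun h => by_contra fun hnp => ?_⟩
  obtain ⟨t, rfl⟩ | hodd := m.even_or_odd
  · exact not_prod_pow_add_one_modEq_one_of_even (by omega) (by omega) h
  · exact not_prod_pow_add_one_modEq_one_of_odd_of_not_prime hM hodd (by omega) hnp h
end

section
/- Let M be a natural number with M > 1. If m is an odd prime, then ∏_{j=1}^{m-1} (M^j + 1) ≡ 1 (mod (M^m − 1)/(M − 1)). -/
/-!
If `μ` is a primitive `n`-th root of unity with `n` odd, evaluating `X ^ n - 1 = ∏ (X - μ ^ k)`
at `-1` gives `∏_{k<n} (μ ^ k + 1) = 2`, hence `∏_{k=1}^{n-1} (μ ^ k + 1) = 1`. Taking `μ` in `ℂ`,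
the cyclotomic polynomial `Φ n` (its minimal polynomial over `ℤ`) therefore divides
`∏_{k=1}^{n-1} (X ^ k + 1) - 1`. For `n` prime, `Φ n = 1 + X + ⋯ + X ^ (n-1)`, and evaluating
at `X = M` gives the congruence.
-/

open Finset Polynomial

namespace IsPrimitiveRoot

variable {R : Type*} [CommRing R] [IsDomain R] {n : ℕ} {μ : R}

lemma prod_range_pow_add_one_eq_two (hμ : IsPrimitiveRoot μ n) (hn : Odd n) :
    ∏ k ∈ range n, (μ ^ k + 1) = 2 := by
  have h := congrArg (eval (-1)) (X_pow_sub_C_eq_prod hμ hn.pos (one_pow n))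
  have hsign : ∏ k ∈ range n, (-1 - μ ^ k) = -∏ k ∈ range n, (μ ^ k + 1) := by
    simp only [← neg_add', prod_neg, card_range, hn.neg_one_pow, neg_one_mul, add_comm]
  simp only [eval_sub, eval_pow, eval_X, eval_C, eval_prod, mul_one, hn.neg_one_pow,
    hsign] at h
  linear_combination h

lemma prod_Icc_pow_add_one_eq_one (hμ : IsPrimitiveRoot μ n) (hn : Odd n) (h2 : (2 : R) ≠ 0) :
    ∏ k ∈ Icc 1 (n - 1), (μ ^ k + 1) = 1 := by
  have h := hμ.prod_range_pow_add_one_eq_two hn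
  rw [prod_range_eq_mul_Ico _ hn.pos, pow_zero, one_add_one_eq_two] at h
  rw [← Ico_add_one_right_eq_Icc, Nat.sub_one_add_one hn.pos.ne']
  exact mul_left_cancel₀ h2 (h.trans (mul_one 2).symm)

end IsPrimitiveRoot

lemma Polynomial.cyclotomic_dvd_prod_Icc_X_pow_add_one_sub_one {n : ℕ} (hn : Odd n) :
    cyclotomic n ℤ ∣ ∏ k ∈ Icc 1 (n - 1), (X ^ k + 1) - 1 := by
  have hμ := Complex.isPrimitiveRoot_exp n hn.pos.ne'
  rw [cyclotomic_eq_minpoly hμ hn.pos]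
  refine minpoly.isIntegrallyClosed_dvd (hμ.isIntegral hn.pos) ?_
  simp [hμ.prod_Icc_pow_add_one_eq_one hn two_ne_zero]

theorem prod_pow_add_one_modEq_of_odd_prime (M m : ℕ) (hM : 1 < M)
    (hp : m.Prime) (hodd : Odd m) :
    (∏ j ∈ Finset.Icc 1 (m - 1), (M ^ j + 1)) ≡ 1 [MOD (M ^ m - 1) / (M - 1)] := by
  have : Fact m.Prime := ⟨hp⟩
  have h := eval_dvd (x := (M : ℤ)) (cyclotomic_dvd_prod_Icc_X_pow_add_one_sub_one hodd)
  rw [cyclotomic_prime] at h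
  rw [← Nat.geomSum_eq hM, Nat.ModEq.comm, Nat.modEq_iff_dvd]
  simpa [eval_prod, eval_finsetSum] using h
end

section
/- Let M be a natural number with M > 1. If m is an even natural number with m > 2, then ∏_{j=1}^{m-1} (M^j + 1) is not congruent to 1 modulo (M^m − 1)/(M − 1). (Indeed, writing m = 2w, the number M^w + 1 divides both the modulus and the product, but does not divide 1.) -/
/-! Write `m = 2w`. The repunit `(M^(2w) - 1)/(M - 1) = 1 + M + ⋯ + M^(2w-1)` factors as
`(1 + M + ⋯ + M^(w-1)) (M^w + 1)`, and `M^w + 1` is also a factor of the product. A product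
congruent to `1` would be coprime to the modulus, yet both share the factor `M^w + 1 > 1`. -/

open Finset

theorem geom_sum_two_mul {R : Type*} [CommSemiring R] (x : R) (n : ℕ) :
    ∑ i ∈ range (2 * n), x ^ i = (∑ i ∈ range n, x ^ i) * (x ^ n + 1) := by
  rw [two_mul, sum_range_add, mul_add, mul_one, sum_mul, add_comm]
  simp_rw [pow_add, mul_comm (x ^ n)]

theorem Nat.pow_add_one_dvd_pow_two_mul_sub_one_div {M : ℕ} (hM : 1 < M) (w : ℕ) :
    M ^ w + 1 ∣ (M ^ (2 * w) - 1) / (M - 1) := by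
  rw [← Nat.geomSum_eq hM, geom_sum_two_mul]
  exact dvd_mul_left _ _

theorem not_modEq_of_even_gen (M m : ℕ) (hM : 1 < M) (hm : 2 < m) (he : Even m) :
    ¬ (∏ j ∈ Finset.Icc 1 (m - 1), (M ^ j + 1)) ≡ 1 [MOD (M ^ m - 1) / (M - 1)] := by
  obtain ⟨w, rfl⟩ := he
  rw [← two_mul]
  intro h
  have hcop : Nat.Coprime _ _ := h.gcd_eq.trans (Nat.gcd_one_left _)
  have hw : w ∈ Icc 1 (2 * w - 1) := mem_Icc.2 ⟨by omega, by omega⟩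
  have hfactor_eq_one := Nat.eq_one_of_dvd_coprimes hcop (dvd_prod_of_mem (fun j ↦ M ^ j + 1) hw)
    (Nat.pow_add_one_dvd_pow_two_mul_sub_one_div hM w)
  have hpow_pos : 0 < M ^ w := by positivity
  omega
end

section
/- Let M be a natural number with M ≥ 2 and let d be an odd natural number with d > 1. Then ∏_{j=0}^{d-1} (M^j + 1) ≡ 2 (mod Φ_d(M)), where Φ_d(M) is the value of the d-th cyclotomic polynomial at M. -/
/-! Evaluating `X ^ d - 1 = ∏ (X - ζ ^ j)` at `-1` shows `∏ (ζ ^ j + 1) = 2` for a primitive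
`d`-th root of unity `ζ` when `d` is odd. Hence `ζ` is a root of `∏ (X ^ j + 1) - 2 ∈ ℤ[X]`, which
is therefore divisible by its minimal polynomial `Φ_d`; evaluating this divisibility at `M` gives
the congruence. -/

open Polynomial

theorem IsPrimitiveRoot.prod_range_pow_add_one_eq_two_s11 {R : Type*} [CommRing R] [IsDomain R]
    {ζ : R} {n : ℕ} (hn : Odd n) (hζ : IsPrimitiveRoot ζ n) :
    ∏ j ∈ Finset.range n, (ζ ^ j + 1) = 2 := by
  have h := congrArg (eval (-1)) (X_pow_sub_C_eq_prod hζ hn.pos (one_pow n))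
  simp only [eval_sub, eval_pow, eval_X, eval_C, eval_prod, mul_one] at h
  calc ∏ j ∈ Finset.range n, (ζ ^ j + 1) = ∏ j ∈ Finset.range n, -(-1 - ζ ^ j) := by simp
    _ = 2 := by rw [Finset.prod_neg, ← h, Finset.card_range, hn.neg_one_pow]; ring

theorem IsPrimitiveRoot.cyclotomic_dvd_of_aeval_eq_zero {K : Type*} [Field K] [CharZero K] {μ : K}
    {n : ℕ} (hn : 0 < n) (hμ : IsPrimitiveRoot μ n) {f : ℤ[X]} (hf : aeval μ f = 0) :
    cyclotomic n ℤ ∣ f := by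
  rw [cyclotomic_eq_minpoly hμ hn]
  exact minpoly.isIntegrallyClosed_dvd (hμ.isIntegral hn) hf

theorem prod_pow_add_one_modEq_two_general (M d : ℕ) (hodd : Odd d) :
    (∏ j ∈ Finset.range d, ((M : ℤ) ^ j + 1)) ≡ 2 [ZMOD (cyclotomic d ℤ).eval (M : ℤ)] := by
  have hd : 0 < d := hodd.pos
  have hζ := Complex.isPrimitiveRoot_exp d hd.ne'
  have hdvd : cyclotomic d ℤ ∣ ∏ j ∈ Finset.range d, (X ^ j + 1) - 2 :=
    hζ.cyclotomic_dvd_of_aeval_eq_zero hd <| by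
      simp [map_ofNat, hζ.prod_range_pow_add_one_eq_two_s11 hodd]
  have hdvdM := eval_dvd hdvd (x := (M : ℤ))
  simp only [eval_sub, eval_prod, eval_add, eval_pow, eval_X, eval_one, eval_ofNat] at hdvdM
  exact (Int.modEq_iff_dvd.2 hdvdM).symm

theorem prod_pow_add_one_modEq_two (M d : ℕ) (hM : 2 ≤ M) (hd : 1 < d) (hodd : Odd d) :
    (∏ j ∈ Finset.range d, ((M : ℤ) ^ j + 1)) ≡ 2 [ZMOD (cyclotomic d ℤ).eval (M : ℤ)] :=
  prod_pow_add_one_modEq_two_general M d hodd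
end

section
/- Let m be an odd natural number with m = c·d where c > 1 and d > 1. If ∏_{j=1}^{m-1} (2^j + 1) ≡ 1 (mod 2^m − 1), then 2^{c-1} ≡ 1 (mod Φ_d(2)), where Φ_d(2) is the value of the d-th cyclotomic polynomial at 2. -/
/-!
Write `q = Φ_d(2)`. For odd `d` and a primitive `d`-th root of unity `ζ`, evaluating
`X ^ d - 1 = ∏ (X - ζ ^ i)` at `-1` gives `∏_{i<d} (ζ ^ i + 1) = 2`, so
`Φ_d ∣ ∏_{i<d} (X ^ i + 1) - 2` and `∏_{i<d} (2 ^ i + 1) ≡ 2 (mod q)`. As `2 ^ d ≡ 1 (mod q)`,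
the factors `2 ^ j + 1` are `d`-periodic modulo `q`, hence `∏_{j<cd} (2 ^ j + 1) ≡ 2 ^ c`.
Since `q ∣ 2 ^ m - 1`, the hypothesis makes the same product `≡ 2`, and `2` can be cancelled
because `q` is odd.
-/

open Polynomial

open Finset in
theorem IsPrimitiveRoot.prod_pow_add_one_eq_two {R : Type*} [CommRing R] [IsDomain R] {n : ℕ}
    {ζ : R} (hζ : IsPrimitiveRoot ζ n) (hn : Odd n) : ∏ i ∈ range n, (ζ ^ i + 1) = 2 := by
  have h := congrArg (eval (-1)) (X_pow_sub_C_eq_prod hζ hn.pos (one_pow n))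
  simp only [eval_sub, eval_pow, eval_X, eval_C, eval_prod, mul_one, hn.neg_one_pow] at h
  have hneg : ∏ i ∈ range n, (-1 - ζ ^ i) = -∏ i ∈ range n, (ζ ^ i + 1) := by
    simp only [← neg_add', prod_neg, card_range, hn.neg_one_pow, neg_one_mul, add_comm (1 : R)]
  rw [hneg] at h
  linear_combination h

theorem cyclotomic_dvd_prod_X_pow_add_one_sub_two {n : ℕ} (hn : Odd n) :
    cyclotomic n ℤ ∣ ∏ i ∈ Finset.range n, (X ^ i + 1) - 2 := by
  have hζ := Complex.isPrimitiveRoot_exp n hn.pos.ne'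
  rw [cyclotomic_eq_minpoly hζ hn.pos]
  refine minpoly.isIntegrallyClosed_dvd (hζ.isIntegral hn.pos) ?_
  simp [hζ.prod_pow_add_one_eq_two hn, map_ofNat]

theorem prod_pow_add_one_modEq_two_s13 {n : ℕ} (hn : Odd n) (x : ℤ) :
    ∏ i ∈ Finset.range n, (x ^ i + 1) ≡ 2 [ZMOD (cyclotomic n ℤ).eval x] := by
  refine (Int.modEq_iff_dvd.mpr ?_).symm
  simpa [eval_prod] using eval_dvd (x := x) (cyclotomic_dvd_prod_X_pow_add_one_sub_two hn)

theorem pow_modEq_one_cyclotomic_eval (n : ℕ) (x : ℤ) :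
    x ^ n ≡ 1 [ZMOD (cyclotomic n ℤ).eval x] :=
  (Int.modEq_iff_dvd.mpr <| by
    simpa using eval_dvd (x := x) (cyclotomic.dvd_X_pow_sub_one n ℤ)).symm

theorem Int.ModEq.prod_range_mul_of_periodic {f : ℕ → ℤ} {n : ℤ} {d : ℕ}
    (hf : ∀ j, f (j + d) ≡ f j [ZMOD n]) (k : ℕ) :
    ∏ j ∈ Finset.range (k * d), f j ≡ (∏ j ∈ Finset.range d, f j) ^ k [ZMOD n] := by
  induction k with
  | zero => simp
  | succ k ih =>
    rw [Nat.succ_mul, add_comm, Finset.prod_range_add, pow_succ']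
    exact .mul_left _ <| (Int.ModEq.prod fun j _ => by rw [add_comm]; exact hf j).trans ih

theorem Int.ModEq.cancel_left_of_isCoprime {n a b c : ℤ} (hc : IsCoprime n c)
    (h : c * a ≡ c * b [ZMOD n]) : a ≡ b [ZMOD n] := by
  rw [Int.modEq_iff_dvd] at h ⊢
  exact hc.dvd_of_dvd_mul_left (by rwa [mul_sub])

theorem Finset.prod_range_eq_mul_prod_Icc {M : Type*} [CommMonoid M] (f : ℕ → M) {m : ℕ}
    (hm : m ≠ 0) : ∏ j ∈ range m, f j = f 0 * ∏ j ∈ Icc 1 (m - 1), f j := by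
  obtain ⟨n, rfl⟩ := Nat.exists_eq_add_one_of_ne_zero hm
  rw [range_eq_Ico, prod_eq_prod_Ico_succ_bot n.succ_pos, zero_add, Nat.succ_eq_add_one,
    Nat.add_sub_cancel, Ico_add_one_right_eq_Icc]

theorem two_pow_modEq_one_of_prod_general (m c d : ℕ) (hodd : Odd m) (hm : m = c * d)
    (h : (∏ j ∈ Finset.Icc 1 (m - 1), (2 ^ j + 1)) ≡ 1 [MOD 2 ^ m - 1]) :
    (2 : ℤ) ^ (c - 1) ≡ 1 [ZMOD (cyclotomic d ℤ).eval 2] := by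
  subst hm
  obtain ⟨hc, hd⟩ := Nat.odd_mul.mp hodd
  set q := (cyclotomic d ℤ).eval 2
  have h2d : (2 : ℤ) ^ d ≡ 1 [ZMOD q] := pow_modEq_one_cyclotomic_eval d 2
  have hq2 : IsCoprime q 2 :=
    (IsCoprime.sub_one_left_of_dvd (dvd_pow_self 2 hd.pos.ne')).of_isCoprime_of_dvd_left
      h2d.symm.dvd
  have hprod : ∏ j ∈ Finset.range (c * d), ((2 : ℤ) ^ j + 1) ≡ 2 ^ c [ZMOD q] :=
    (Int.ModEq.prod_range_mul_of_periodic (fun j => by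
      simpa [pow_add] using ((Int.ModEq.refl (2 ^ j)).mul h2d).add_right 1) c).trans
      ((prod_pow_add_one_modEq_two_s13 hd 2).pow c)
  have hP : ∏ j ∈ Finset.Icc 1 (c * d - 1), ((2 : ℤ) ^ j + 1) ≡ 1 [ZMOD q] := by
    have h' := Int.natCast_modEq_iff.mpr h
    push_cast [Nat.one_le_two_pow] at h'
    refine h'.of_dvd (Int.ModEq.dvd ?_)
    simpa [mul_comm c, pow_mul] using (h2d.pow c).symm
  refine Int.ModEq.cancel_left_of_isCoprime hq2 ?_
  calc 2 * 2 ^ (c - 1) = 2 ^ c := by rw [← pow_succ', Nat.sub_add_cancel hc.pos]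
    _ ≡ ∏ j ∈ Finset.range (c * d), ((2 : ℤ) ^ j + 1) [ZMOD q] := hprod.symm
    _ = 2 * ∏ j ∈ Finset.Icc 1 (c * d - 1), ((2 : ℤ) ^ j + 1) := by
      rw [Finset.prod_range_eq_mul_prod_Icc _ hodd.pos.ne']; norm_num
    _ ≡ 2 * 1 [ZMOD q] := hP.mul_left 2

theorem two_pow_modEq_one_of_prod (m c d : ℕ) (hodd : Odd m) (hm : m = c * d)
    (hc : 1 < c) (hd : 1 < d)
    (h : (∏ j ∈ Finset.Icc 1 (m - 1), (2 ^ j + 1)) ≡ 1 [MOD 2 ^ m - 1]) :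
    (2 : ℤ) ^ (c - 1) ≡ 1 [ZMOD (cyclotomic d ℤ).eval 2] :=
  two_pow_modEq_one_of_prod_general m c d hodd hm h
end

section
/- Let M be a natural number with M > 1 and let m be an odd natural number with m = c·d where c > 1 and d > 1. If ∏_{j=1}^{m-1} (M^j + 1) ≡ 1 (mod (M^m − 1)/(M − 1)), then 2^{c-1} ≡ 1 (mod Φ_d(M)), where Φ_d(M) is the value of the d-th cyclotomic polynomial at M. -/
/-!
Let `K = Φ_d(M)` and compute in `ℤ/K`, where `M` is a root of `Φ_d`. Then `M ^ d = 1`, and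
`∏_{0<r<d} (M ^ r + 1) = 1` because `Φ_d` divides `∏_{0<r<d} (X ^ r + 1) - 1` for odd `d`: at a
primitive `d`-th root of unity `ζ`, `∏_{0<r<d} (-1 - ζ ^ r)` is `1 + X + ⋯ + X ^ (d - 1)` evaluated
at `-1`, which is `1`. So the product over `0 < j < c d` splits into `c` blocks of length `d` and
equals `2 ^ (c - 1)`. Since `Φ_d` divides `1 + X + ⋯ + X ^ (m - 1)`, `K` divides the modulus of the
hypothesis, which therefore makes this product `1`.
-/

open Polynomial Finset

theorem IsPrimitiveRoot.prod_Ico_pow_add_one_eq_one {R : Type*} [CommRing R] [IsDomain R]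
    {d : ℕ} {μ : R} (hμ : IsPrimitiveRoot μ d) (hd : Odd d) :
    ∏ k ∈ Ico 1 d, (μ ^ k + 1) = 1 := by
  obtain ⟨n, rfl⟩ : ∃ n, d = n + 1 := ⟨d - 1, by have := hd.pos; omega⟩
  have hroots := X_pow_sub_C_eq_prod hμ n.succ_pos (one_pow (n + 1))
  rw [C_1, ← mul_geom_sum, prod_range_succ', pow_zero, mul_one, mul_comm, eq_comm] at hroots
  -- `∏ k < n, (X - μ ^ (k + 1)) = 1 + X + ⋯ + X ^ n`, evaluated at `-1`
  have hneg := congrArg (eval (-1)) (mul_right_cancel₀ (X_sub_C_ne_zero 1) hroots)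
  simp only [eval_prod, eval_sub, eval_X, eval_C, mul_one, eval_geom_sum, neg_one_geom_sum,
    Nat.not_even_iff_odd.mpr hd, if_false] at hneg
  have hn : Even n := by obtain ⟨t, ht⟩ := hd; exact ⟨t, by omega⟩
  calc ∏ k ∈ Ico 1 (n + 1), (μ ^ k + 1)
      = ∏ k ∈ range n, (-1) * (-1 - μ ^ (k + 1)) := by
        rw [prod_Ico_eq_prod_range, Nat.add_sub_cancel]
        exact prod_congr rfl fun k _ => by ring
    _ = 1 := by rw [prod_mul_distrib, hneg, prod_const, card_range, hn.neg_one_pow, one_mul]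

theorem cyclotomic_dvd_prod_Ico_X_pow_add_one_sub_one {d : ℕ} (hd : Odd d) :
    cyclotomic d ℤ ∣ ∏ k ∈ Ico 1 d, (X ^ k + 1) - 1 := by
  have hμ := Complex.isPrimitiveRoot_exp d hd.pos.ne'
  rw [cyclotomic_eq_minpoly hμ hd.pos]
  refine minpoly.isIntegrallyClosed_dvd (hμ.isIntegral hd.pos) ?_
  simp [hμ.prod_Ico_pow_add_one_eq_one hd]

section CommRing

variable {R : Type*} [CommRing R] {x : R} {d : ℕ}

theorem prod_Ico_mul_pow_add_one_of_pow_eq_one (hx : x ^ d = 1) (k : ℕ) :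
    ∏ j ∈ Ico (k * d) ((k + 1) * d), (x ^ j + 1) = ∏ j ∈ range d, (x ^ j + 1) := by
  rw [prod_Ico_eq_prod_range, add_one_mul, Nat.add_sub_cancel_left]
  refine prod_congr rfl fun j _ => ?_
  rw [pow_add, pow_mul', hx, one_pow, one_mul]

theorem prod_Ico_one_mul_pow_add_one (hd : 0 < d) (hx : x ^ d = 1)
    (hA : ∏ j ∈ Ico 1 d, (x ^ j + 1) = 1) (k : ℕ) :
    ∏ j ∈ Ico 1 ((k + 1) * d), (x ^ j + 1) = 2 ^ k := by
  induction k with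
  | zero => simpa using hA
  | succ k ih =>
    have h1 : 1 ≤ (k + 1) * d := Nat.one_le_iff_ne_zero.mpr (by positivity)
    rw [← prod_Ico_consecutive _ h1 (Nat.mul_le_mul_right d (k + 1).le_succ), ih,
      prod_Ico_mul_pow_add_one_of_pow_eq_one hx, prod_range_eq_mul_Ico _ hd, hA, pow_succ]
    norm_num

theorem prod_Ico_one_mul_pow_add_one_of_aeval_cyclotomic_eq_zero (hd : Odd d)
    (hx : aeval x (cyclotomic d ℤ) = 0) (k : ℕ) :
    ∏ j ∈ Ico 1 ((k + 1) * d), (x ^ j + 1) = 2 ^ k := by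
  have hxd : x ^ d = 1 := by
    simpa [sub_eq_zero] using
      aeval_eq_zero_of_dvd_aeval_eq_zero (cyclotomic.dvd_X_pow_sub_one d ℤ) hx
  have hA : ∏ j ∈ Ico 1 d, (x ^ j + 1) = 1 := by
    simpa [sub_eq_zero] using
      aeval_eq_zero_of_dvd_aeval_eq_zero (cyclotomic_dvd_prod_Ico_X_pow_add_one_sub_one hd) hx
  exact prod_Ico_one_mul_pow_add_one hd.pos hxd hA k

end CommRing

theorem two_pow_modEq_one_of_prod_gen (M m c d : ℕ) (hM : 1 < M) (hodd : Odd m)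
    (hm : m = c * d) (hc : 1 < c) (hd : 1 < d)
    (h : (∏ j ∈ Finset.Icc 1 (m - 1), (M ^ j + 1)) ≡ 1 [MOD (M ^ m - 1) / (M - 1)]) :
    (2 : ℤ) ^ (c - 1) ≡ 1 [ZMOD (cyclotomic d ℤ).eval (M : ℤ)] := by
  obtain ⟨k, rfl⟩ : ∃ k, c = k + 1 := ⟨c - 1, by omega⟩
  subst hm
  set n := ((cyclotomic d ℤ).eval (M : ℤ)).natAbs
  have hΦ : aeval (M : ZMod n) (cyclotomic d ℤ) = 0 := by
    rw [← Int.cast_natCast, ← eq_intCast (algebraMap ℤ (ZMod n)), aeval_algebraMap_apply]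
    simp [n, ZMod.intCast_zmod_eq_zero_iff_dvd]
  have hN : (((M ^ ((k + 1) * d) - 1) / (M - 1) : ℕ) : ZMod n) = 0 := by
    simpa [← Nat.geomSum_eq hM] using aeval_eq_zero_of_dvd_aeval_eq_zero
      (cyclotomic_dvd_geom_sum_of_dvd ℤ (dvd_mul_left d (k + 1)) hd.ne') hΦ
  have hprod := (ZMod.natCast_eq_natCast_iff _ _ n).mpr
    (h.of_dvd ((ZMod.natCast_eq_zero_iff _ n).mp hN))
  have hm_pos : 1 ≤ (k + 1) * d := Nat.mul_pos k.succ_pos (by omega)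
  rw [← Ico_add_one_right_eq_Icc, Nat.sub_add_cancel hm_pos] at hprod
  push_cast at hprod
  rw [← Int.modEq_natAbs, ← ZMod.intCast_eq_intCast_iff]
  push_cast
  rw [← prod_Ico_one_mul_pow_add_one_of_aeval_cyclotomic_eq_zero (Nat.odd_mul.mp hodd).2 hΦ k,
    hprod]
end

section
/- Let M and c be natural numbers with M > 2 and c ≥ 2, and let d > 2 be a natural number each of whose prime divisors is at least c. Then Φ_d(M) > 2^{c-1}; in particular, 2^{c-1} is not congruent to 1 modulo Φ_d(M). -/
/-!
If `p` is the least prime factor of `d`, then `c - 1 ≤ p - 1 = φ(p) ≤ φ(d)`, while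
`Φ_d(M) > (M - 1)^φ(d) ≥ 2^φ(d)` because every root of `Φ_d` lies on the unit circle.
-/

open Polynomial

theorem Nat.sub_one_le_totient_of_forall_prime_dvd_le {c d : ℕ} (hd : 1 < d)
    (hp : ∀ p : ℕ, p.Prime → p ∣ d → c ≤ p) : c - 1 ≤ d.totient := by
  have hmin : d.minFac.Prime := Nat.minFac_prime hd.ne'
  have hdvd : d.minFac.totient ∣ d.totient := Nat.totient_dvd_of_dvd d.minFac_dvd
  have hle := Nat.le_of_dvd (Nat.totient_pos.2 (by omega)) hdvd
  rw [Nat.totient_prime hmin] at hle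
  have := hp _ hmin d.minFac_dvd
  omega

theorem two_pow_totient_lt_cyclotomic_eval {n M : ℕ} (hn : 1 < n) (hM : 2 < M) :
    2 ^ n.totient < (cyclotomic n ℤ).eval (M : ℤ) := by
  have hpos : 0 < (cyclotomic n ℤ).eval (M : ℤ) :=
    cyclotomic_pos' n (by exact_mod_cast hM.trans' one_lt_two)
  rw [← Int.natAbs_of_nonneg hpos.le]
  have : 2 ^ n.totient < ((cyclotomic n ℤ).eval (M : ℤ)).natAbs :=
    calc 2 ^ n.totient ≤ (M - 1) ^ n.totient := Nat.pow_le_pow_left (by omega) _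
      _ < _ := sub_one_pow_totient_lt_natAbs_cyclotomic_eval hn (by omega)
  exact_mod_cast this

theorem Int.not_modEq_one_of_one_lt_of_lt {a m : ℤ} (ha : 1 < a) (ham : a < m) :
    ¬ a ≡ 1 [ZMOD m] := fun h =>
  (sub_ne_zero.2 ha.ne') <|
    Int.eq_zero_of_dvd_of_nonneg_of_lt (by omega) (by omega) (Int.ModEq.dvd h.symm)

theorem cyclotomic_eval_gt_two_pow (M c d : ℕ) (hM : 2 < M) (hc : 2 ≤ c) (hd : 2 < d)
    (hp : ∀ p : ℕ, p.Prime → p ∣ d → c ≤ p) :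
    (cyclotomic d ℤ).eval (M : ℤ) > 2 ^ (c - 1) ∧
      ¬ (2 : ℤ) ^ (c - 1) ≡ 1 [ZMOD (cyclotomic d ℤ).eval (M : ℤ)] := by
  have htot : c - 1 ≤ d.totient := Nat.sub_one_le_totient_of_forall_prime_dvd_le (by omega) hp
  have hlt : (2 : ℤ) ^ (c - 1) < (cyclotomic d ℤ).eval (M : ℤ) :=
    (pow_le_pow_right₀ one_le_two htot).trans_lt
      (two_pow_totient_lt_cyclotomic_eval (by omega) hM)
  exact ⟨hlt, Int.not_modEq_one_of_one_lt_of_lt (one_lt_pow₀ one_lt_two (by omega)) hlt⟩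
end
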